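/- arXiv:1809.02294 — 2 statements merged into one kernel-verified Lean document; each statement's English description precedes it below -/
import Mathlib

section
/- Let 0 < p < 1 and let X be a positive random variable satisfying the distributional identity X ~ 1/X + ε with ε ~ Bernoulli(p) independent of X. Then E[log X] = (p/2)·E[log(1 + X)]. -/
/-!
Since `log (1/x + e) = -log x + e · log (1 + x)` for `x > 0` and `e ∈ {0, 1}`, taking expectations in
`X ~ 1/X + ε` and using the independence of `X` and `ε` gives
`E[log X] = -E[log X] + p · E[log (1 + X)]`.
-/

open MeasureTheory ProbabilityTheory Real

lemma log_one_div_add_of_eq_zero_or_eq_one {x e : ℝ} (hx : 0 < x) (he : e = 0 ∨ e = 1) :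
    log (1 / x + e) = -log x + log (1 + x) * e := by
  rcases he with rfl | rfl
  · simp [log_inv]
  · rw [show 1 / x + 1 = (1 + x) / x by field_simp, log_div (by positivity) hx.ne']
    ring

section Bernoulli

variable {Ω : Type*} [MeasurableSpace Ω] {μ : Measure Ω} {ε : Ω → ℝ} {p : ℝ}

lemma ae_eq_zero_or_eq_one_of_measure_eq [IsProbabilityMeasure μ] (hε : Measurable ε)
    (h1 : μ {ω | ε ω = 1} = ENNReal.ofReal p) (h0 : μ {ω | ε ω = 0} = ENNReal.ofReal (1 - p)) :
    ∀ᵐ ω ∂μ, ε ω = 0 ∨ ε ω = 1 := by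
  have hdisj : Disjoint {ω | ε ω = 0} {ω | ε ω = 1} :=
    Set.disjoint_left.mpr fun ω h0 h1 => by simp_all
  have hunion : μ ({ω | ε ω = 0} ∪ {ω | ε ω = 1}) = 1 := by
    refine le_antisymm prob_le_one ?_
    calc 1 = ENNReal.ofReal (1 - p + p) := by simp
      _ ≤ ENNReal.ofReal (1 - p) + ENNReal.ofReal p := ENNReal.ofReal_add_le
      _ = _ := by rw [measure_union hdisj (hε (measurableSet_singleton 1)), h0, h1]
  exact (prob_compl_eq_zero_iff ((hε (measurableSet_singleton 0)).union
    (hε (measurableSet_singleton 1)))).mpr hunion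

lemma ae_eq_indicator_of_eq_zero_or_eq_one (h : ∀ᵐ ω ∂μ, ε ω = 0 ∨ ε ω = 1) :
    ε =ᵐ[μ] {ω | ε ω = 1}.indicator 1 := by
  filter_upwards [h] with ω hω
  rcases hω with hω | hω <;> simp [Set.indicator, hω]

lemma integrable_of_ae_eq_zero_or_eq_one [IsFiniteMeasure μ] (hε : Measurable ε)
    (h : ∀ᵐ ω ∂μ, ε ω = 0 ∨ ε ω = 1) : Integrable ε μ :=
  ((integrable_const (1 : ℝ)).indicator (hε (measurableSet_singleton 1))).congr
    (ae_eq_indicator_of_eq_zero_or_eq_one h).symm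

lemma integral_eq_of_measure_eq [IsProbabilityMeasure μ] (hε : Measurable ε)
    (h1 : μ {ω | ε ω = 1} = ENNReal.ofReal p) (h0 : μ {ω | ε ω = 0} = ENNReal.ofReal (1 - p)) :
    ∫ ω, ε ω ∂μ = p := by
  have hp : 0 ≤ p := by
    have := h0 ▸ (prob_le_one : μ {ω | ε ω = 0} ≤ 1)
    linarith [ENNReal.ofReal_le_one.mp this]
  have hA : MeasurableSet {ω | ε ω = 1} := hε (measurableSet_singleton 1)
  rw [integral_congr_ae (ae_eq_indicator_of_eq_zero_or_eq_one
      (ae_eq_zero_or_eq_one_of_measure_eq hε h1 h0)), integral_indicator_one hA, measureReal_def, h1,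
    ENNReal.toReal_ofReal hp]

end Bernoulli

theorem bernoulli_p_log_identity_one_general
    {Ω : Type*} [MeasureSpace Ω] [IsProbabilityMeasure (ℙ : Measure Ω)]
    (p : ℝ)
    (X ε : Ω → ℝ) (hXm : Measurable X) (hεm : Measurable ε)
    (hXpos : ∀ᵐ ω ∂ℙ, 0 < X ω)
    (hε1 : ℙ {ω | ε ω = 1} = ENNReal.ofReal p)
    (hε0 : ℙ {ω | ε ω = 0} = ENNReal.ofReal (1 - p))
    (hindep : IndepFun X ε ℙ)
    (hdist : Measure.map X ℙ = Measure.map (fun ω => 1 / X ω + ε ω) ℙ)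
    (hint1 : Integrable (fun ω => Real.log (X ω)) ℙ)
    (hint2 : Integrable (fun ω => Real.log (1 + X ω)) ℙ) :
    ∫ ω, Real.log (X ω) ∂ℙ = (p / 2) * ∫ ω, Real.log (1 + X ω) ∂ℙ := by
  have hε01 := ae_eq_zero_or_eq_one_of_measure_eq hεm hε1 hε0
  have hlaw : IdentDistrib X (fun ω => 1 / X ω + ε ω) ℙ ℙ :=
    ⟨hXm.aemeasurable, ((measurable_const.div hXm).add hεm).aemeasurable, hdist⟩
  have hindepLog : IndepFun (fun ω => log (1 + X ω)) ε ℙ :=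
    hindep.comp (measurable_log.comp (measurable_const_add 1)) measurable_id
  have hint3 : Integrable (fun ω => log (1 + X ω) * ε ω) ℙ :=
    hindepLog.integrable_mul hint2 (integrable_of_ae_eq_zero_or_eq_one hεm hε01)
  have hkey : ∫ ω, log (X ω) ∂ℙ = -∫ ω, log (X ω) ∂ℙ + p * ∫ ω, log (1 + X ω) ∂ℙ :=
    calc ∫ ω, log (X ω) ∂ℙ = ∫ ω, log (1 / X ω + ε ω) ∂ℙ := (hlaw.comp measurable_log).integral_eq
      _ = ∫ ω, (-log (X ω) + log (1 + X ω) * ε ω) ∂ℙ := by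
        refine integral_congr_ae ?_
        filter_upwards [hXpos, hε01] with ω hx he using log_one_div_add_of_eq_zero_or_eq_one hx he
      _ = -∫ ω, log (X ω) ∂ℙ + p * ∫ ω, log (1 + X ω) ∂ℙ := by
        rw [integral_add hint1.fun_neg hint3, integral_neg,
          ← Pi.mul_def, hindepLog.integral_mul_eq_mul_integral hint2.aestronglyMeasurable
            hεm.aestronglyMeasurable, integral_eq_of_measure_eq hεm hε1 hε0, mul_comm]
  linarith

/-- For the Bernoulli(p) invariant distribution `X ~ 1/X + ε`:
`E[log X] = (p/2)·E[log(1 + X)]`. -/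
theorem bernoulli_p_log_identity_one
    {Ω : Type*} [MeasureSpace Ω] [IsProbabilityMeasure (ℙ : Measure Ω)]
    (p : ℝ) (hp0 : 0 < p) (hp1 : p < 1)
    (X ε : Ω → ℝ) (hXm : Measurable X) (hεm : Measurable ε)
    (hXpos : ∀ᵐ ω ∂ℙ, 0 < X ω)
    (hε1 : ℙ {ω | ε ω = 1} = ENNReal.ofReal p)
    (hε0 : ℙ {ω | ε ω = 0} = ENNReal.ofReal (1 - p))
    (hindep : IndepFun X ε ℙ)
    (hdist : Measure.map X ℙ = Measure.map (fun ω => 1 / X ω + ε ω) ℙ)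
    (hint1 : Integrable (fun ω => Real.log (X ω)) ℙ)
    (hint2 : Integrable (fun ω => Real.log (1 + X ω)) ℙ) :
    ∫ ω, Real.log (X ω) ∂ℙ = (p / 2) * ∫ ω, Real.log (1 + X ω) ∂ℙ :=
  bernoulli_p_log_identity_one_general p X ε hXm hεm hXpos hε1 hε0 hindep hdist hint1 hint2
end

section
/- Let X be a positive random variable with atomless law satisfying the distributional identity X ~ 1/X + ε with ε ~ Bernoulli(1/2) independent of X, and let c_n = ∏_{k=1}^{2^n} (a(n,k) + b(n,k)) where a, b are the coefficient-pair arrays of the multi-level recursion. Then for every n ≥ 0, (log c_n)/((n+7)·2^n) ≤ E[log X] ≤ (log c_n)/((n+4)·2^n). -/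
open MeasureTheory ProbabilityTheory Real Finset

/-!
Write `λ = E[log X]` and `T(p, q) = E[log (p X + q)]`. Conditioning on `ε` in `X ~ 1/X + ε`
turns `E[g X]` into the average of `E[g (1/X)]` and `E[g (1/X + 1)]`; for `g = log (p · + q)`
this is the relation `T(q, p) + T(p + q, p) = 2 T(p, q) + 2 λ`. Since the pairs at level `n + 1`
are exactly the `(a + b, a)` and `(b, a)` built from the pairs `(a, b)` at level `n`, the level
sums obey `S_{n+1} = 2 S_n + 2^{n+1} λ`, and `S_0 = T(2, 1) = 6 λ` gives `S_n = (n + 6) 2^n λ`.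
For `g = log⁺` the same conditioning gives `E[log⁺ X] = 2 λ`, hence
`log (p + q) - λ ≤ T(p, q) ≤ log (p + q) + 2 λ`; summing over a level bounds `log c_n`.
-/

section Bernoulli

variable {Ω : Type*} [MeasurableSpace Ω] {μ : Measure Ω} [IsProbabilityMeasure μ] {ε : Ω → ℝ}

lemma ae_eq_zero_or_eq_one_of_measure_eq_half (hε : Measurable ε)
    (h0 : μ {ω | ε ω = 0} = 1 / 2) (h1 : μ {ω | ε ω = 1} = 1 / 2) :
    ∀ᵐ ω ∂μ, ε ω = 0 ∨ ε ω = 1 := by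
  have hdisj : Disjoint {ω | ε ω = 0} {ω | ε ω = 1} :=
    Set.disjoint_left.2 fun ω h0 h1 => zero_ne_one (h0.symm.trans h1)
  have hunion : μ ({ω | ε ω = 0} ∪ {ω | ε ω = 1}) = 1 := by
    rw [measure_union hdisj (hε (measurableSet_singleton 1)), h0, h1, ENNReal.add_halves]
  exact (prob_compl_eq_zero_iff ((hε (measurableSet_singleton 0)).union
    (hε (measurableSet_singleton 1)))).2 hunion

lemma integral_comp_add_eq_half_add_half {Z : Ω → ℝ} (hZ : Measurable Z) (hε : Measurable ε)
    (h0 : μ {ω | ε ω = 0} = 1 / 2) (h1 : μ {ω | ε ω = 1} = 1 / 2) (hind : IndepFun Z ε μ)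
    {g : ℝ → ℝ} (hg : Measurable g) (hgZ : Integrable (fun ω => g (Z ω)) μ)
    (hgZ₁ : Integrable (fun ω => g (Z ω + 1)) μ) :
    ∫ ω, g (Z ω + ε ω) ∂μ = (∫ ω, g (Z ω) ∂μ + ∫ ω, g (Z ω + 1) ∂μ) / 2 := by
  have hset : ∀ e : ℝ, MeasurableSet[MeasurableSpace.comap ε inferInstance] {ω | ε ω = e} :=
    fun e => ⟨{e}, measurableSet_singleton e, rfl⟩
  have hindep : Indep (MeasurableSpace.comap ε inferInstance)
      (MeasurableSpace.comap Z inferInstance) μ := hind.symm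
  have hsplit : (fun ω => g (Z ω + ε ω)) =ᵐ[μ] fun ω =>
      {ω | ε ω = 0}.indicator (fun ω => g (Z ω)) ω +
        {ω | ε ω = 1}.indicator (fun ω => g (Z ω + 1)) ω := by
    filter_upwards [ae_eq_zero_or_eq_one_of_measure_eq_half hε h0 h1] with ω hω
    rcases hω with hω | hω <;> simp [hω]
  calc ∫ ω, g (Z ω + ε ω) ∂μ
      = ∫ ω in {ω | ε ω = 0}, g (Z ω) ∂μ + ∫ ω in {ω | ε ω = 1}, g (Z ω + 1) ∂μ := by
        rw [integral_congr_ae hsplit, integral_add (hgZ.indicator (hε.comap_le _ (hset 0)))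
          (hgZ₁.indicator (hε.comap_le _ (hset 1))), integral_indicator (hε.comap_le _ (hset 0)),
          integral_indicator (hε.comap_le _ (hset 1))]
    _ = μ.real {ω | ε ω = 0} * ∫ ω, g (Z ω) ∂μ
          + μ.real {ω | ε ω = 1} * ∫ ω, g (Z ω + 1) ∂μ := by
        rw [hindep.setIntegral_eq_mul hε.comap_le hZ.aemeasurable (hset 0)
            hg.aestronglyMeasurable,
          hindep.setIntegral_eq_mul (f := fun z => g (z + 1)) hε.comap_le hZ.aemeasurable
            (hset 1) (hg.comp (measurable_add_const 1)).aestronglyMeasurable]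
    _ = _ := by
        simp only [measureReal_def, h0, h1, ENNReal.toReal_div, ENNReal.toReal_one,
          ENNReal.toReal_ofNat]
        ring

end Bernoulli

section LogAffine

variable {p q x : ℝ}

lemma mul_add_pos (hp : 0 ≤ p) (hq : 0 ≤ q) (hpq : 0 < p + q) (hx : 0 < x) :
    0 < p * x + q := by
  rcases hp.eq_or_lt with rfl | hp
  · simpa using hpq
  · positivity

lemma log_add_add_min_log_le_log_mul_add (hp : 0 ≤ p) (hq : 0 ≤ q) (hpq : 0 < p + q)
    (hx : 0 < x) : log (p + q) + min (log x) 0 ≤ log (p * x + q) := by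
  rcases le_total x 1 with hx1 | hx1
  · rw [min_eq_left (log_nonpos hx.le hx1), ← log_mul hpq.ne' hx.ne']
    exact log_le_log (by positivity) (by nlinarith)
  · rw [min_eq_right (log_nonneg hx1), add_zero]
    exact log_le_log hpq (by nlinarith)

lemma log_mul_add_le_log_add_add_max_log (hp : 0 ≤ p) (hq : 0 ≤ q) (hpq : 0 < p + q)
    (hx : 0 < x) : log (p * x + q) ≤ log (p + q) + max (log x) 0 := by
  rcases le_total x 1 with hx1 | hx1
  · rw [max_eq_right (log_nonpos hx.le hx1), add_zero]
    exact log_le_log (mul_add_pos hp hq hpq hx) (by nlinarith)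
  · rw [max_eq_left (log_nonneg hx1), ← log_mul hpq.ne' hx.ne']
    exact log_le_log (mul_add_pos hp hq hpq hx) (by nlinarith)

lemma abs_log_mul_add_le (hp : 0 ≤ p) (hq : 0 ≤ q) (hpq : 0 < p + q) (hx : 0 < x) :
    |log (p * x + q)| ≤ |log (p + q)| + |log x| := by
  have hlow := log_add_add_min_log_le_log_mul_add hp hq hpq hx
  have hupp := log_mul_add_le_log_add_add_max_log hp hq hpq hx
  have hmin : -|log x| ≤ min (log x) 0 := le_min (neg_abs_le _) (neg_nonpos.2 (abs_nonneg _))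
  have hmax : max (log x) 0 ≤ |log x| := max_le (le_abs_self _) (abs_nonneg _)
  rw [abs_le]
  constructor <;> linarith [neg_abs_le (log (p + q)), le_abs_self (log (p + q))]

lemma log_mul_one_div_add (hp : 0 ≤ p) (hq : 0 ≤ q) (hpq : 0 < p + q) (hx : 0 < x) :
    log (p * (1 / x) + q) = log (q * x + p) - log x := by
  have hpos : 0 < q * x + p := mul_add_pos hq hp (by linarith) hx
  rw [← log_div hpos.ne' hx.ne']
  congr 1
  field_simp
  ring

end LogAffine

lemma integrable_log_mul_add {Ω : Type*} [MeasurableSpace Ω] {μ : Measure Ω} [IsFiniteMeasure μ]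
    {X : Ω → ℝ} (hXm : AEMeasurable X μ) (hXpos : ∀ᵐ ω ∂μ, 0 < X ω)
    (hlog : Integrable (fun ω => log (X ω)) μ) {p q : ℝ} (hp : 0 ≤ p) (hq : 0 ≤ q)
    (hpq : 0 < p + q) : Integrable (fun ω => log (p * X ω + q)) μ := by
  refine ((integrable_const |log (p + q)|).add hlog.abs).mono'
    (measurable_log.comp_aemeasurable ((hXm.const_mul p).add_const q)).aestronglyMeasurable ?_
  filter_upwards [hXpos] with ω hω
  exact abs_log_mul_add_le hp hq hpq hω

lemma sum_Icc_one_add_self {M : Type*} [AddCommMonoid M] (f : ℕ → M) (m : ℕ) :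
    ∑ k ∈ Icc 1 (m + m), f k = ∑ k ∈ Icc 1 m, (f k + f (k + m)) := by
  simp only [← Ico_add_one_right_eq_Icc, sum_Ico_eq_sum_range, Nat.add_sub_cancel, sum_range_add,
    sum_add_distrib]
  congr 1
  exact sum_congr rfl fun k _ => congr_arg f (by ring)

structure IsCoeffPairRecursion (a b : ℕ → ℕ → ℕ) : Prop where
  a_zero_one : a 0 1 = 2
  b_zero_one : b 0 1 = 1
  succ_of_le : ∀ n k, 1 ≤ k → k ≤ 2 ^ n → a (n + 1) k = a n k + b n k ∧ b (n + 1) k = a n k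
  succ_of_gt : ∀ n k, 2 ^ n + 1 ≤ k → k ≤ 2 ^ (n + 1) →
    a (n + 1) k = b n (k - 2 ^ n) ∧ b (n + 1) k = a n (k - 2 ^ n)

namespace IsCoeffPairRecursion

variable {a b : ℕ → ℕ → ℕ}

lemma succ_add_pow (h : IsCoeffPairRecursion a b) {n k : ℕ} (hk₁ : 1 ≤ k) (hk₂ : k ≤ 2 ^ n) :
    a (n + 1) (k + 2 ^ n) = b n k ∧ b (n + 1) (k + 2 ^ n) = a n k := by
  simpa using h.succ_of_gt n (k + 2 ^ n) (by omega) (by rw [pow_succ]; omega)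

lemma add_pos (h : IsCoeffPairRecursion a b) :
    ∀ n k, 1 ≤ k → k ≤ 2 ^ n → 0 < a n k + b n k := by
  intro n
  induction n with
  | zero =>
    intro k hk₁ hk₂
    obtain rfl : k = 1 := by rw [pow_zero] at hk₂; omega
    simp [h.a_zero_one]
  | succ n ih =>
    intro k hk₁ hk₂
    rcases le_or_gt k (2 ^ n) with hk | hk
    · have := ih k hk₁ hk
      have := h.succ_of_le n k hk₁ hk
      omega
    · obtain ⟨j, rfl⟩ : ∃ j, k = j + 2 ^ n := ⟨k - 2 ^ n, by omega⟩
      have := ih j (by omega) (by rw [pow_succ] at hk₂; omega)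
      have := h.succ_add_pow (n := n) (k := j) (by omega) (by rw [pow_succ] at hk₂; omega)
      omega

lemma sum_eq_of_add_swap {T : ℕ → ℕ → ℝ} {l : ℝ} (h : IsCoeffPairRecursion a b)
    (hT : ∀ p q, 0 < p + q → T q p + T (p + q) p = 2 * T p q + 2 * l) (n : ℕ) :
    ∑ k ∈ Icc 1 (2 ^ n), T (a n k) (b n k) = 2 ^ n * (T 2 1 + n * l) := by
  induction n with
  | zero => simp [h.a_zero_one, h.b_zero_one]
  | succ n ih =>
    have hpair : ∀ k ∈ Icc 1 (2 ^ n), T (a (n + 1) k) (b (n + 1) k) +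
        T (a (n + 1) (k + 2 ^ n)) (b (n + 1) (k + 2 ^ n)) = 2 * T (a n k) (b n k) + 2 * l := by
      intro k hk
      rw [mem_Icc] at hk
      obtain ⟨ha, hb⟩ := h.succ_of_le n k hk.1 hk.2
      obtain ⟨ha', hb'⟩ := h.succ_add_pow hk.1 hk.2
      rw [ha, hb, ha', hb', add_comm (T _ _)]
      exact hT _ _ (h.add_pos n k hk.1 hk.2)
    rw [pow_succ, mul_two, sum_Icc_one_add_self, sum_congr rfl hpair, sum_add_distrib,
      ← mul_sum, ih, sum_const, Nat.card_Icc, Nat.add_sub_cancel, nsmul_eq_mul]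
    push_cast
    ring

end IsCoeffPairRecursion

structure IsInvAddBernoulliFixedPoint {Ω : Type*} [MeasurableSpace Ω] (μ : Measure Ω)
    (X ε : Ω → ℝ) : Prop where
  measurable_X : Measurable X
  measurable_ε : Measurable ε
  pos : ∀ᵐ ω ∂μ, 0 < X ω
  measure_ε_eq_zero : μ {ω | ε ω = 0} = 1 / 2
  measure_ε_eq_one : μ {ω | ε ω = 1} = 1 / 2
  indepFun : IndepFun X ε μ
  map_eq : μ.map X = μ.map (fun ω => 1 / X ω + ε ω)

namespace IsInvAddBernoulliFixedPoint

variable {Ω : Type*} [MeasurableSpace Ω] {μ : Measure Ω} [IsProbabilityMeasure μ] {X ε : Ω → ℝ}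

lemma integral_comp_eq (h : IsInvAddBernoulliFixedPoint μ X ε) {g : ℝ → ℝ} (hg : Measurable g)
    (hg₀ : Integrable (fun ω => g (1 / X ω)) μ) (hg₁ : Integrable (fun ω => g (1 / X ω + 1)) μ) :
    ∫ ω, g (X ω) ∂μ = (∫ ω, g (1 / X ω) ∂μ + ∫ ω, g (1 / X ω + 1) ∂μ) / 2 := by
  have hinv : Measurable fun x : ℝ => 1 / x := measurable_id.const_div 1
  have hZ : Measurable fun ω => 1 / X ω := hinv.comp h.measurable_X
  have hY : Measurable fun ω => 1 / X ω + ε ω := hZ.add h.measurable_ε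
  rw [← integral_map h.measurable_X.aemeasurable hg.aestronglyMeasurable, h.map_eq,
    integral_map hY.aemeasurable hg.aestronglyMeasurable]
  exact integral_comp_add_eq_half_add_half hZ h.measurable_ε h.measure_ε_eq_zero
    h.measure_ε_eq_one (h.indepFun.comp hinv measurable_id) hg hg₀ hg₁

lemma integral_log_mul_add_swap_add (h : IsInvAddBernoulliFixedPoint μ X ε)
    (hlog : Integrable (fun ω => log (X ω)) μ) {p q : ℝ} (hp : 0 ≤ p) (hq : 0 ≤ q)
    (hpq : 0 < p + q) :
    ∫ ω, log (q * X ω + p) ∂μ + ∫ ω, log ((p + q) * X ω + p) ∂μ =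
      2 * ∫ ω, log (p * X ω + q) ∂μ + 2 * ∫ ω, log (X ω) ∂μ := by
  have hint₀ := integrable_log_mul_add h.measurable_X.aemeasurable h.pos hlog hq hp
    (by linarith)
  have hint₁ := integrable_log_mul_add h.measurable_X.aemeasurable h.pos hlog
    (add_nonneg hp hq) hp (by linarith)
  have hg₀ : (fun ω => log (p * (1 / X ω) + q)) =ᵐ[μ]
      fun ω => log (q * X ω + p) - log (X ω) := by
    filter_upwards [h.pos] with ω hω
    exact log_mul_one_div_add hp hq hpq hω
  have hg₁ : (fun ω => log (p * (1 / X ω + 1) + q)) =ᵐ[μ]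
      fun ω => log ((p + q) * X ω + p) - log (X ω) := by
    filter_upwards [h.pos] with ω hω
    rw [mul_add, mul_one, add_assoc]
    exact log_mul_one_div_add hp (add_nonneg hp hq) (by linarith) hω
  have key := h.integral_comp_eq (g := fun x => log (p * x + q))
    (measurable_log.comp ((measurable_id.const_mul p).add_const q))
    ((hint₀.sub hlog).congr hg₀.symm) ((hint₁.sub hlog).congr hg₁.symm)
  rw [integral_congr_ae hg₀, integral_congr_ae hg₁, integral_sub hint₀ hlog,
    integral_sub hint₁ hlog] at key
  linarith

lemma integral_max_log_zero (h : IsInvAddBernoulliFixedPoint μ X ε)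
    (hlog : Integrable (fun ω => log (X ω)) μ) :
    ∫ ω, max (log (X ω)) 0 ∂μ = 2 * ∫ ω, log (X ω) ∂μ := by
  have hlog_add_one : ∫ ω, log (X ω + 1) ∂μ = 4 * ∫ ω, log (X ω) ∂μ := by
    have := h.integral_log_mul_add_swap_add hlog zero_le_one le_rfl (by norm_num)
    norm_num at this
    linarith
  have hint : Integrable (fun ω => log (X ω + 1)) μ := by
    simpa using integrable_log_mul_add h.measurable_X.aemeasurable h.pos hlog
      zero_le_one zero_le_one (by norm_num)
  have hg₀ : (fun ω => max (log (1 / X ω)) 0) = fun ω => max (-log (X ω)) 0 := by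
    simp only [one_div, log_inv]
  have hg₁ : (fun ω => max (log (1 / X ω + 1)) 0) =ᵐ[μ]
      fun ω => log (X ω + 1) - log (X ω) := by
    filter_upwards [h.pos] with ω hω
    have := log_mul_one_div_add zero_le_one zero_le_one (by norm_num) hω
    rw [one_mul, one_mul] at this
    rw [max_eq_left (log_nonneg (le_add_of_nonneg_left (by positivity))), this]
  have hpos : Integrable (fun ω => max (log (X ω)) 0) μ := hlog.pos_part
  have hneg : Integrable (fun ω => max (-log (X ω)) 0) μ := hlog.neg.pos_part
  have key := h.integral_comp_eq (measurable_log.max measurable_const) (hg₀ ▸ hneg)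
    ((hint.sub hlog).congr hg₁.symm)
  rw [hg₀, integral_congr_ae hg₁, integral_sub hint hlog, hlog_add_one] at key
  have hdiff : ∫ ω, max (log (X ω)) 0 ∂μ - ∫ ω, max (-log (X ω)) 0 ∂μ = ∫ ω, log (X ω) ∂μ := by
    rw [← integral_sub hpos hneg]
    simp only [max_zero_sub_max_neg_zero_eq_self]
  linarith

lemma integral_log_mul_add_mem_Icc (h : IsInvAddBernoulliFixedPoint μ X ε)
    (hlog : Integrable (fun ω => log (X ω)) μ) {p q : ℝ} (hp : 0 ≤ p) (hq : 0 ≤ q)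
    (hpq : 0 < p + q) :
    ∫ ω, log (p * X ω + q) ∂μ ∈
      Set.Icc (log (p + q) - ∫ ω, log (X ω) ∂μ) (log (p + q) + 2 * ∫ ω, log (X ω) ∂μ) := by
  have hint := integrable_log_mul_add h.measurable_X.aemeasurable h.pos hlog hp hq hpq
  have hmax : Integrable (fun ω => max (log (X ω)) 0) μ := hlog.pos_part
  have hmin_eq : (fun ω => min (log (X ω)) 0) = fun ω => log (X ω) - max (log (X ω)) 0 :=
    funext fun ω => eq_sub_of_add_eq (by rw [min_add_max, add_zero])
  have hmin : Integrable (fun ω => min (log (X ω)) 0) μ := hmin_eq ▸ hlog.sub hmax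
  constructor
  · calc log (p + q) - ∫ ω, log (X ω) ∂μ = ∫ ω, (log (p + q) + min (log (X ω)) 0) ∂μ := by
          rw [integral_add (integrable_const _) hmin, hmin_eq, integral_sub hlog hmax,
            h.integral_max_log_zero hlog, integral_const, probReal_univ, one_smul]
          ring
      _ ≤ ∫ ω, log (p * X ω + q) ∂μ := by
          refine integral_mono_ae ((integrable_const _).add hmin) hint ?_
          filter_upwards [h.pos] with ω hω
          exact log_add_add_min_log_le_log_mul_add hp hq hpq hω
  · calc ∫ ω, log (p * X ω + q) ∂μ ≤ ∫ ω, (log (p + q) + max (log (X ω)) 0) ∂μ := by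
          refine integral_mono_ae hint ((integrable_const _).add hmax) ?_
          filter_upwards [h.pos] with ω hω
          exact log_mul_add_le_log_add_add_max_log hp hq hpq hω
      _ = log (p + q) + 2 * ∫ ω, log (X ω) ∂μ := by
          rw [integral_add (integrable_const _) hmax, h.integral_max_log_zero hlog,
            integral_const, probReal_univ, one_smul]

lemma integral_log_two_mul_add_one (h : IsInvAddBernoulliFixedPoint μ X ε)
    (hlog : Integrable (fun ω => log (X ω)) μ) :
    ∫ ω, log (2 * X ω + 1) ∂μ = 6 * ∫ ω, log (X ω) ∂μ := by
  have h₁₀ := h.integral_log_mul_add_swap_add hlog zero_le_one le_rfl (by norm_num)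
  have h₁₁ := h.integral_log_mul_add_swap_add hlog zero_le_one zero_le_one (by norm_num)
  norm_num at h₁₀ h₁₁
  linarith

lemma sum_integral_log_mul_add {a b : ℕ → ℕ → ℕ} (h : IsInvAddBernoulliFixedPoint μ X ε)
    (hlog : Integrable (fun ω => log (X ω)) μ) (hab : IsCoeffPairRecursion a b) (n : ℕ) :
    ∑ k ∈ Icc 1 (2 ^ n), ∫ ω, log (a n k * X ω + b n k) ∂μ =
      (n + 6) * 2 ^ n * ∫ ω, log (X ω) ∂μ := by
  have hswap : ∀ p q : ℕ, 0 < p + q → ∫ ω, log (q * X ω + p) ∂μ +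
      ∫ ω, log (((p + q : ℕ) : ℝ) * X ω + p) ∂μ =
        2 * ∫ ω, log (p * X ω + q) ∂μ + 2 * ∫ ω, log (X ω) ∂μ := fun p q hpq => by
    push_cast
    exact h.integral_log_mul_add_swap_add hlog p.cast_nonneg q.cast_nonneg (by exact_mod_cast hpq)
  rw [hab.sum_eq_of_add_swap (T := fun p q => ∫ ω, log (p * X ω + q) ∂μ) hswap n]
  push_cast
  rw [h.integral_log_two_mul_add_one hlog]
  ring

lemma log_prod_add_mem_Icc {a b : ℕ → ℕ → ℕ} (h : IsInvAddBernoulliFixedPoint μ X ε)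
    (hlog : Integrable (fun ω => log (X ω)) μ) (hab : IsCoeffPairRecursion a b) (n : ℕ) :
    log ((∏ k ∈ Icc 1 (2 ^ n), (a n k + b n k) : ℕ) : ℝ) ∈
      Set.Icc ((n + 4) * 2 ^ n * ∫ ω, log (X ω) ∂μ) ((n + 7) * 2 ^ n * ∫ ω, log (X ω) ∂μ) := by
  have hpos : ∀ k ∈ Icc 1 (2 ^ n), (0 : ℝ) < a n k + b n k := fun k hk => by
    rw [mem_Icc] at hk
    exact_mod_cast hab.add_pos n k hk.1 hk.2
  have hmem : ∀ k ∈ Icc 1 (2 ^ n), ∫ ω, log (a n k * X ω + b n k) ∂μ ∈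
      Set.Icc (log (a n k + b n k) - ∫ ω, log (X ω) ∂μ)
        (log (a n k + b n k) + 2 * ∫ ω, log (X ω) ∂μ) := fun k hk =>
    h.integral_log_mul_add_mem_Icc hlog (Nat.cast_nonneg _) (Nat.cast_nonneg _) (hpos k hk)
  have hlow := sum_le_sum fun k hk => (hmem k hk).1
  have hupp := sum_le_sum fun k hk => (hmem k hk).2
  rw [sum_sub_distrib, sum_const, Nat.card_Icc, Nat.add_sub_cancel, nsmul_eq_mul,
    h.sum_integral_log_mul_add hlog hab] at hlow
  rw [sum_add_distrib, sum_const, Nat.card_Icc, Nat.add_sub_cancel, nsmul_eq_mul,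
    h.sum_integral_log_mul_add hlog hab] at hupp
  push_cast at hlow hupp ⊢
  rw [log_prod fun k hk => (hpos k hk).ne']
  constructor <;> linarith

end IsInvAddBernoulliFixedPoint

theorem bernoulli_half_lyapunov_bounds_general
    {Ω : Type*} [MeasureSpace Ω] [IsProbabilityMeasure (ℙ : Measure Ω)]
    (X ε : Ω → ℝ) (hXm : Measurable X) (hεm : Measurable ε)
    (hXpos : ∀ᵐ ω ∂ℙ, 0 < X ω)
    (hε1 : ℙ {ω | ε ω = 1} = 1 / 2)
    (hε0 : ℙ {ω | ε ω = 0} = 1 / 2)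
    (hindep : IndepFun X ε ℙ)
    (hdist : Measure.map X ℙ = Measure.map (fun ω => 1 / X ω + ε ω) ℙ)
    (a b : ℕ → ℕ → ℕ)
    (ha0 : a 0 1 = 2) (hb0 : b 0 1 = 1)
    (hrec₁ : ∀ n k, 1 ≤ k → k ≤ 2 ^ n →
      a (n + 1) k = a n k + b n k ∧ b (n + 1) k = a n k)
    (hrec₂ : ∀ n k, 2 ^ n + 1 ≤ k → k ≤ 2 ^ (n + 1) →
      a (n + 1) k = b n (k - 2 ^ n) ∧ b (n + 1) k = a n (k - 2 ^ n))
    (c : ℕ → ℕ)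
    (hc : ∀ n, c n = ∏ k ∈ Finset.Icc 1 (2 ^ n), (a n k + b n k))
    (hintX : Integrable (fun ω => Real.log (X ω)) ℙ) :
    ∀ n : ℕ,
      Real.log (c n) / (((n : ℝ) + 7) * 2 ^ n) ≤ ∫ ω, Real.log (X ω) ∂ℙ ∧
      ∫ ω, Real.log (X ω) ∂ℙ ≤ Real.log (c n) / (((n : ℝ) + 4) * 2 ^ n) := by
  intro n
  have hX : IsInvAddBernoulliFixedPoint ℙ X ε := ⟨hXm, hεm, hXpos, hε0, hε1, hindep, hdist⟩
  obtain ⟨hlow, hupp⟩ := hX.log_prod_add_mem_Icc hintX ⟨ha0, hb0, hrec₁, hrec₂⟩ n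
  rw [← hc n] at hlow hupp
  constructor
  · rw [div_le_iff₀ (by positivity)]
    linarith
  · rw [le_div_iff₀ (by positivity)]
    linarith

/-- Bounds on the Lyapunov exponent `λ = E[log X]` of the Bernoulli(1/2) model in
terms of `c_n = ∏_{k=1}^{2^n} (a(n,k) + b(n,k))`:
`(log c_n)/((n+7)·2^n) ≤ E[log X] ≤ (log c_n)/((n+4)·2^n)` for all `n ≥ 0`. -/
theorem bernoulli_half_lyapunov_bounds
    {Ω : Type*} [MeasureSpace Ω] [IsProbabilityMeasure (ℙ : Measure Ω)]
    (X ε : Ω → ℝ) (hXm : Measurable X) (hεm : Measurable ε)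
    (hXpos : ∀ᵐ ω ∂ℙ, 0 < X ω)
    (hatomless : ∀ x : ℝ, ℙ {ω | X ω = x} = 0)
    (hε1 : ℙ {ω | ε ω = 1} = 1 / 2)
    (hε0 : ℙ {ω | ε ω = 0} = 1 / 2)
    (hindep : IndepFun X ε ℙ)
    (hdist : Measure.map X ℙ = Measure.map (fun ω => 1 / X ω + ε ω) ℙ)
    (a b : ℕ → ℕ → ℕ)
    (ha0 : a 0 1 = 2) (hb0 : b 0 1 = 1)
    (hrec₁ : ∀ n k, 1 ≤ k → k ≤ 2 ^ n →
      a (n + 1) k = a n k + b n k ∧ b (n + 1) k = a n k)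
    (hrec₂ : ∀ n k, 2 ^ n + 1 ≤ k → k ≤ 2 ^ (n + 1) →
      a (n + 1) k = b n (k - 2 ^ n) ∧ b (n + 1) k = a n (k - 2 ^ n))
    (c : ℕ → ℕ)
    (hc : ∀ n, c n = ∏ k ∈ Finset.Icc 1 (2 ^ n), (a n k + b n k))
    (hintX : Integrable (fun ω => Real.log (X ω)) ℙ)
    (hintab : ∀ n k, 1 ≤ k → k ≤ 2 ^ n →
      Integrable (fun ω => Real.log ((a n k : ℝ) * X ω + (b n k : ℝ))) ℙ) :
    ∀ n : ℕ,
      Real.log (c n) / (((n : ℝ) + 7) * 2 ^ n) ≤ ∫ ω, Real.log (X ω) ∂ℙ ∧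
      ∫ ω, Real.log (X ω) ∂ℙ ≤ Real.log (c n) / (((n : ℝ) + 4) * 2 ^ n) :=
  bernoulli_half_lyapunov_bounds_general X ε hXm hεm hXpos hε1 hε0 hindep hdist a b ha0 hb0 hrec₁
    hrec₂ c hc hintX
end
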